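/- Refinement addition: if r₁ <: r₂ and r₁ <: r_L and r₂ <: r_L, then (r_L +ᵣ r₁) <: (r_L +ᵣ r₂), where +ᵣ is the refinement merge operation that on conflicts keeps the right-hand member. -/

import Mathlib

namespace NominalWyvern

abbrev TName := String
abbrev Lbl := String
abbrev Var := String
abbrev Loc := Nat

/-- Paths: variables or store locations. -/
inductive Path where
  | var : Var → Path
  | loc : Loc → Path
deriving DecidableEq

/-- Type-member bounds: upper (≤), lower (≥), exact (=). -/
inductive Bound where
  | le | ge | eq
deriving DecidableEq

/-- Base types: named types or path-dependent types p.t. -/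
inductive Base where
  | name : TName → Base
  | sel : Path → Lbl → Base
deriving DecidableEq

/-- Types: ⊥, ⊤, or a refined base type β r. -/
inductive Ty where
  | bot
  | top
  | refined : Base → List (Lbl × Bound × Ty) → Ty

/-- A refinement: a list of type-member declarations t B τ. -/
abbrev Refinement := List (Lbl × Bound × Ty)

/-- Member declarations σ of a named type. -/
inductive Decl where
  | typeMem : Lbl → Bound → Ty → Decl
  | field : Lbl → Ty → Decl
  | method : Lbl → Ty → Var → Ty → Decl

mutual
/-- Expressions (A-normal form). -/
inductive Expr where
  | path : Path → Expr
  | sel : Path → Lbl → Expr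
  | app : Path → Lbl → Path → Expr
  | new : Ty → Var → List Defn → Expr
  | lett : Var → Expr → Expr → Expr
/-- Object member definitions d. -/
inductive Defn where
  | typeDef : Lbl → Ty → Defn
  | fieldDef : Lbl → Ty → Path → Defn
  | methodDef : Lbl → Ty → Var → Ty → Expr → Defn
end

/-- Δ : name-definition context. -/
abbrev NameCtx := List (TName × Var × List Decl)
/-- Σ : subtype-declaration context (entries  n r <: n'). -/
abbrev SubCtx := List (TName × Refinement × TName)
/-- Γ : variable context (head = most recently bound). -/
abbrev VarCtx := List (Var × Ty)
/-- S : location context. -/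
abbrev LocCtx := List (Loc × Ty)
/-- μ : runtime heap. -/
abbrev Heap := List (Loc × Var × List Defn)

/-! ### Substitution -/

def Path.subst (x : Var) (p : Path) : Path → Path
  | .var y => if y = x then p else .var y
  | .loc l => .loc l

def Base.subst (x : Var) (p : Path) : Base → Base
  | .name n => .name n
  | .sel q t => .sel (q.subst x p) t

mutual
def Ty.subst (x : Var) (p : Path) : Ty → Ty
  | .bot => .bot
  | .top => .top
  | .refined β r => .refined (β.subst x p) (substR x p r)
def substR (x : Var) (p : Path) : List (Lbl × Bound × Ty) → List (Lbl × Bound × Ty)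
  | [] => []
  | (t, B, τ) :: rest => (t, B, Ty.subst x p τ) :: substR x p rest
end

def Decl.subst (x : Var) (p : Path) : Decl → Decl
  | .typeMem t B τ => .typeMem t B (τ.subst x p)
  | .field v τ => .field v (τ.subst x p)
  | .method f τa xa τr => .method f (τa.subst x p) xa (τr.subst x p)

mutual
def Expr.subst (x : Var) (p : Path) : Expr → Expr
  | .path q => .path (q.subst x p)
  | .sel q v => .sel (q.subst x p) v
  | .app q f q' => .app (q.subst x p) f (q'.subst x p)
  | .new τ xs ds => .new (τ.subst x p) xs (substDs x p ds)
  | .lett y e1 e2 => .lett y (e1.subst x p) (e2.subst x p)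
def Defn.subst (x : Var) (p : Path) : Defn → Defn
  | .typeDef t τ => .typeDef t (τ.subst x p)
  | .fieldDef v τ q => .fieldDef v (τ.subst x p) (q.subst x p)
  | .methodDef f τa xa τr e => .methodDef f (τa.subst x p) xa (τr.subst x p) (e.subst x p)
def substDs (x : Var) (p : Path) : List Defn → List Defn
  | [] => []
  | d :: ds => d.subst x p :: substDs x p ds
end

/-! ### Free variables -/

def Path.fv : Path → List Var
  | .var x => [x]
  | .loc _ => []

def Base.fv : Base → List Var
  | .name _ => []
  | .sel p _ => p.fv

mutual
def Ty.fv : Ty → List Var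
  | .bot => []
  | .top => []
  | .refined β r => β.fv ++ fvR r
def fvR : List (Lbl × Bound × Ty) → List Var
  | [] => []
  | (_, _, τ) :: rest => τ.fv ++ fvR rest
end

/-! ### Context lookups and merging -/

def lookupVar (Γ : VarCtx) (x : Var) : Option Ty :=
  (Γ.find? (fun e => e.1 == x)).map (·.2)

def lookupLoc (S : LocCtx) (l : Loc) : Option Ty :=
  (S.find? (fun e => e.1 == l)).map (·.2)

def lookupName (Δ : NameCtx) (n : TName) : Option (Var × List Decl) :=
  (Δ.find? (fun e => e.1 == n)).map (·.2)

def pathTy (Γ : VarCtx) (S : LocCtx) : Path → Option Ty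
  | .var x => lookupVar Γ x
  | .loc l => lookupLoc S l

def heapGet (μ : Heap) (l : Loc) : Option (Var × List Defn) :=
  (μ.find? (fun e => e.1 == l)).map (·.2)

/-- Refinement merge  r +ᵣ r' : on conflict the right-hand member is kept. -/
def mergeRef (r r' : Refinement) : Refinement :=
  r.filter (fun δ => r'.all (fun δ' => δ.1 != δ'.1)) ++ r'

/-- Merge extra refinements into a type (τ +ᵣ r). -/
def Ty.merge : Ty → Refinement → Ty
  | .bot, _ => .bot
  | .top, _ => .top
  | .refined β r, r' => .refined β (mergeRef r r')

end NominalWyvern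
/-! ### Declaration lookup -/

namespace NominalWyvern

def declTypeMem (t : Lbl) : Decl → Option (Bound × Ty)
  | .typeMem t' B τ => if t' == t then some (B, τ) else none
  | _ => none

def declField (v : Lbl) : Decl → Option Ty
  | .field v' τ => if v' == v then some τ else none
  | _ => none

def declMethod (f : Lbl) : Decl → Option (Ty × Var × Ty)
  | .method f' τa xa τr => if f' == f then some (τa, xa, τr) else none
  | _ => none

/-- Declaration lookup for type members: τ ∋_p (type t B τ'); refinements take
    precedence, otherwise the named definition is consulted with the self
    variable substituted by p. -/
def lookupTypeMem (Δ : NameCtx) (p : Path) (τ : Ty) (t : Lbl) : Option (Bound × Ty) :=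
  match τ with
  | .refined β r =>
    match r.find? (fun δ => δ.1 == t) with
    | some (_, B, τ') => some (B, τ')
    | none =>
      match β with
      | .name n =>
        match lookupName Δ n with
        | some (xn, σs) =>
          match σs.findSome? (declTypeMem t) with
          | some (B, τ') => some (B, Ty.subst xn p τ')
          | none => none
        | none => none
      | _ => none
  | _ => none

/-- Declaration lookup for fields. -/
def lookupField (Δ : NameCtx) (p : Path) (τ : Ty) (v : Lbl) : Option Ty :=
  match τ with
  | .refined (.name n) _ =>
    match lookupName Δ n with
    | some (xn, σs) => (σs.findSome? (declField v)).map (Ty.subst xn p)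
    | none => none
  | _ => none

/-- Declaration lookup for methods. -/
def lookupMethod (Δ : NameCtx) (p : Path) (τ : Ty) (f : Lbl) : Option (Ty × Var × Ty) :=
  match τ with
  | .refined (.name n) _ =>
    match lookupName Δ n with
    | some (xn, σs) =>
      (σs.findSome? (declMethod f)).map
        (fun m => (m.1.subst xn p, m.2.1, m.2.2.subst xn p))
    | none => none
  | _ => none

/-! ### Exposure (fuel-indexed algorithm and the induced judgment) -/

/-- Fuel-indexed exposure: normalizes a type to a supertype by unfolding
    path-dependent types through upper/exact bounds (rules Exp-Top, Exp-Bot,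
    Exp-Name, Exp-Upper, Exp-Otherwise). -/
def exposeF (Δ : NameCtx) (Γ : VarCtx) (S : LocCtx) : Nat → Ty → Option Ty
  | 0, _ => none
  | _+1, .top => some .top
  | _+1, .bot => some .bot
  | _+1, .refined (.name n) r => some (.refined (.name n) r)
  | k+1, .refined (.sel p t) r =>
    match pathTy Γ S p with
    | none => some (.refined (.sel p t) r)
    | some τp =>
      match exposeF Δ Γ S k τp with
      | none => none
      | some τp' =>
        match lookupTypeMem Δ p τp' t with
        | some (.le, τt) => (exposeF Δ Γ S k τt).map (fun τ' => τ'.merge r)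
        | some (.eq, τt) => (exposeF Δ Γ S k τt).map (fun τ' => τ'.merge r)
        | _ => some (.refined (.sel p t) r)

/-- The exposure judgment Γ | S ⊢ τ ⇑ τ'. -/
def Exposure (Δ : NameCtx) (Γ : VarCtx) (S : LocCtx) (τ τ' : Ty) : Prop :=
  ∃ k, exposeF Δ Γ S k τ = some τ'

/-- Upcast Γ | S ⊢ τ ↑ τ' : a single unfolding through an upper/exact bound
    (Uc-Upper), or the identity when Uc-Upper does not apply (Uc-Otherwise). -/
inductive Upcast (Δ : NameCtx) (Γ : VarCtx) (S : LocCtx) : Ty → Ty → Prop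
  | upper {p t r τp τp' B τt} :
      pathTy Γ S p = some τp →
      Exposure Δ Γ S τp τp' →
      lookupTypeMem Δ p τp' t = some (B, τt) → B ≠ .ge →
      Upcast Δ Γ S (.refined (.sel p t) r) (τt.merge r)
  | otherwise {τ} :
      (∀ p t r, τ = Ty.refined (.sel p t) r →
        ¬ ∃ τp τp' B τt, pathTy Γ S p = some τp ∧ Exposure Δ Γ S τp τp' ∧
            lookupTypeMem Δ p τp' t = some (B, τt) ∧ B ≠ Bound.ge) →
      Upcast Δ Γ S τ τ

/-- Downcast Γ | S ⊢ τ ↓ τ' : a single unfolding through a lower/exact bound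
    (Dc-Lower), or the identity when Dc-Lower does not apply (Dc-Otherwise). -/
inductive Downcast (Δ : NameCtx) (Γ : VarCtx) (S : LocCtx) : Ty → Ty → Prop
  | lower {p t r τp τp' B τt} :
      pathTy Γ S p = some τp →
      Exposure Δ Γ S τp τp' →
      lookupTypeMem Δ p τp' t = some (B, τt) → B ≠ .le →
      Downcast Δ Γ S (.refined (.sel p t) r) (τt.merge r)
  | otherwise {τ} :
      (∀ p t r, τ = Ty.refined (.sel p t) r →
        ¬ ∃ τp τp' B τt, pathTy Γ S p = some τp ∧ Exposure Δ Γ S τp τp' ∧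
            lookupTypeMem Δ p τp' t = some (B, τt) ∧ B ≠ Bound.le) →
      Downcast Δ Γ S τ τ

/-! ### Subtyping -/

mutual
/-- Type subtyping Γ | S ⊢ τ <: τ'
    (rules S-Top, S-Bot, S-Refine, S-NameUp, S-Lower, S-Upper). -/
inductive Subty (Δ : NameCtx) (Sg : SubCtx) (Γ : VarCtx) (S : LocCtx) : Ty → Ty → Prop
  | top {τ} : Subty Δ Sg Γ S τ .top
  | bot {τ} : Subty Δ Sg Γ S .bot τ
  | refine {β r r'} :
      SubtyR Δ Sg Γ S r r' →
      Subty Δ Sg Γ S (.refined β r) (.refined β r')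
  | nameUp {n r rS nS n' r'} :
      (n, rS, nS) ∈ Sg →
      SubtyR Δ Sg Γ S r rS →
      Subty Δ Sg Γ S (.refined (.name nS) r) (.refined (.name n') r') →
      Subty Δ Sg Γ S (.refined (.name n) r) (.refined (.name n') r')
  | lower {p t r τ τ'} :
      Upcast Δ Γ S (.refined (.sel p t) r) τ →
      Subty Δ Sg Γ S τ τ' →
      Subty Δ Sg Γ S (.refined (.sel p t) r) τ'
  | upper {p t r τ τ'} :
      Downcast Δ Γ S (.refined (.sel p t) r) τ' →
      Subty Δ Sg Γ S τ τ' →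
      Subty Δ Sg Γ S τ (.refined (.sel p t) r)

/-- Type-member subtyping (rules S-T-Eq, S-T-Le, S-T-Ge). -/
inductive SubtyM (Δ : NameCtx) (Sg : SubCtx) (Γ : VarCtx) (S : LocCtx) :
    (Lbl × Bound × Ty) → (Lbl × Bound × Ty) → Prop
  | eq {t τ τ'} :
      Subty Δ Sg Γ S τ τ' → Subty Δ Sg Γ S τ' τ →
      SubtyM Δ Sg Γ S (t, .eq, τ) (t, .eq, τ')
  | le {t B τ τ'} : B ≠ .ge →
      Subty Δ Sg Γ S τ τ' →
      SubtyM Δ Sg Γ S (t, B, τ) (t, .le, τ')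
  | ge {t B τ τ'} : B ≠ .le →
      Subty Δ Sg Γ S τ' τ →
      SubtyM Δ Sg Γ S (t, B, τ) (t, .ge, τ')

/-- Refinement subtyping (rules S-R-Nil, S-R-Cons). -/
inductive SubtyR (Δ : NameCtx) (Sg : SubCtx) (Γ : VarCtx) (S : LocCtx) :
    Refinement → Refinement → Prop
  | nil {r} : SubtyR Δ Sg Γ S r []
  | cons {r t B τ B' τ' δs} :
      (t, B, τ) ∈ r →
      SubtyM Δ Sg Γ S (t, B, τ) (t, B', τ') →
      SubtyR Δ Sg Γ S r δs →
      SubtyR Δ Sg Γ S r ((t, B', τ') :: δs)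
end

end NominalWyvern
namespace NominalWyvern

/-! ### Bound operations and avoidance -/

/-- Partial join of bounds. -/
def boundJoin : Bound → Bound → Option Bound
  | .eq, B => some B
  | B, .eq => some B
  | .le, .le => some .le
  | .ge, .ge => some .ge
  | _, _ => none

/-- Product of bounds. -/
def boundMul : Bound → Bound → Bound
  | .eq, _ => .eq
  | B, .eq => B
  | .le, .le => .le
  | .ge, .ge => .le
  | .le, .ge => .ge
  | .ge, .le => .ge

mutual
/-- Avoidance on base types: Γ | S ⊢ β [B/x] ⇑ τ. -/
inductive AvoidB (Δ : NameCtx) (Γ : VarCtx) (S : LocCtx) (x : Var) : Base → Bound → Ty → Prop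
  | name {n} : AvoidB Δ Γ S x (.name n) .eq (.refined (.name n) [])
  | eqWeaken {β B τ'} :
      AvoidB Δ Γ S x β .eq τ' →
      AvoidB Δ Γ S x β B τ'
  | pathNE {p t} : p ≠ .var x →
      AvoidB Δ Γ S x (.sel p t) .eq (.refined (.sel p t) [])
  | pathEq {t τx τx' B B' B'' τt τt'} :
      lookupVar Γ x = some τx →
      Exposure Δ Γ S τx τx' →
      lookupTypeMem Δ (.var x) τx' t = some (B, τt) →
      AvoidT Δ Γ S x τt B' τt' →
      boundJoin B B' = some B'' →
      AvoidB Δ Γ S x (.sel (.var x) t) B'' τt'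

/-- Avoidance on types: Γ | S ⊢ τ [B/x] ⇑ τ'. -/
inductive AvoidT (Δ : NameCtx) (Γ : VarCtx) (S : LocCtx) (x : Var) : Ty → Bound → Ty → Prop
  | top : AvoidT Δ Γ S x .top .eq .top
  | bot : AvoidT Δ Γ S x .bot .eq .bot
  | eqWeaken {τ B τ'} :
      AvoidT Δ Γ S x τ .eq τ' →
      AvoidT Δ Γ S x τ B τ'
  | type {β B τ' r r'} :
      AvoidB Δ Γ S x β B τ' →
      AvoidR Δ Γ S x B r r' →
      AvoidT Δ Γ S x (.refined β r) B (τ'.merge r')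

/-- Avoidance on refinements (pointwise, with bound product). -/
inductive AvoidR (Δ : NameCtx) (Γ : VarCtx) (S : LocCtx) (x : Var) : Bound → Refinement → Refinement → Prop
  | nil {B} : AvoidR Δ Γ S x B [] []
  | cons {B t Br τ τ' rest rest'} :
      AvoidT Δ Γ S x τ (boundMul Br B) τ' →
      AvoidR Δ Γ S x B rest rest' →
      AvoidR Δ Γ S x B ((t, Br, τ) :: rest) ((t, Br, τ') :: rest')
end

/-! ### Well-formedness of environments and types; ranks -/

/-- Rank of a variable: position from the left (leftmost = 1, absent = 0).
    The head of the list is the most recently bound (highest-rank) variable. -/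
def rankVar (Γ : VarCtx) (x : Var) : Nat :=
  match Γ.findIdx? (fun e => e.1 == x) with
  | some i => Γ.length - i
  | none => 0

def rankPath (Γ : VarCtx) : Path → Nat
  | .var x => rankVar Γ x
  | .loc _ => 0

/-- Head-rank of a type: the rank of the root path of a path-dependent type,
    and 0 for ⊤, ⊥ and named types. -/
def headRank (Γ : VarCtx) : Ty → Nat
  | .refined (.sel p _) _ => rankPath Γ p
  | _ => 0

/-- A well-formed environment: each binding mentions only variables bound
    before (to the right of) it, and bindings are fresh. -/
def WfEnv : VarCtx → Prop
  | [] => True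
  | (x, τ) :: Γ => (∀ y ∈ τ.fv, lookupVar Γ y ≠ none) ∧ lookupVar Γ x = none ∧ WfEnv Γ

/-- A type is well-formed with respect to Γ if it only mentions variables of Γ. -/
def WfTyIn (Γ : VarCtx) (τ : Ty) : Prop :=
  ∀ y ∈ τ.fv, lookupVar Γ y ≠ none

/-! ### Term typing -/

/-- The refinement induced by the type-member definitions of an object body. -/
def defnRefinement : List Defn → Refinement
  | [] => []
  | .typeDef t τ :: ds => (t, .eq, τ) :: defnRefinement ds
  | _ :: ds => defnRefinement ds

/-- Type validity Γ | S ⊢ τ wf. -/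
inductive WfTy (Δ : NameCtx) (Sg : SubCtx) (Γ : VarCtx) (S : LocCtx) : Ty → Prop
  | top : WfTy Δ Sg Γ S .top
  | bot : WfTy Δ Sg Γ S .bot
  | refined {β rβ x τu} :
      lookupVar Γ x = none →
      Exposure Δ Γ S (.refined β []) τu →
      (∀ t B τ, (t, B, τ) ∈ rβ → ∃ B' τ',
        lookupTypeMem Δ (.var x) τu t = some (B', τ') ∧
        SubtyM Δ Sg ((x, .refined β rβ) :: Γ) S (t, B, τ) (t, B', τ')) →
      WfTy Δ Sg Γ S (.refined β rβ)

mutual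
/-- Expression typing Γ | S ⊢ e : τ (rules T-Var, T-Loc, T-Sel, T-App,
    T-New, T-Let), with subsumption on values (locations) only. -/
inductive HasTy (Δ : NameCtx) (Sg : SubCtx) : VarCtx → LocCtx → Expr → Ty → Prop
  | path {Γ S p τ} :
      pathTy Γ S p = some τ →
      HasTy Δ Sg Γ S (.path p) τ
  | sub {Γ S l τ τ'} :
      lookupLoc S l = some τ →
      Subty Δ Sg Γ S τ τ' →
      HasTy Δ Sg Γ S (.path (.loc l)) τ'
  | sel {Γ S p v τ n r τv} :
      pathTy Γ S p = some τ →
      Exposure Δ Γ S τ (.refined (.name n) r) →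
      lookupField Δ p (.refined (.name n) r) v = some τv →
      HasTy Δ Sg Γ S (.sel p v) τv
  | app {Γ S p f q τ n r τa xa τr τ'} :
      pathTy Γ S p = some τ →
      Exposure Δ Γ S τ (.refined (.name n) r) →
      lookupMethod Δ p (.refined (.name n) r) f = some (τa, xa, τr) →
      pathTy Γ S q = some τ' →
      Subty Δ Sg Γ S τ' τa →
      HasTy Δ Sg Γ S (.app p f q) (τr.subst xa q)
  | new {Γ S τ x ds} :
      WfTy Δ Sg Γ S τ →
      ObjTy Δ Sg Γ S x ds τ →
      HasTy Δ Sg Γ S (.new τ x ds) τ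
  | lett {Γ S x e1 e2 τ1 τ2 τ} :
      HasTy Δ Sg Γ S e1 τ1 →
      HasTy Δ Sg ((x, τ1) :: Γ) S e2 τ2 →
      AvoidT Δ ((x, τ1) :: Γ) S x τ2 .le τ →
      HasTy Δ Sg Γ S (.lett x e1 e2) τ

/-- Object-definition typing Γ | S ⊢ {x ⇒ d̄} : τ. -/
inductive ObjTy (Δ : NameCtx) (Sg : SubCtx) : VarCtx → LocCtx → Var → List Defn → Ty → Prop
  | intro {Γ S x ds τ τx} :
      τx = τ.merge (defnRefinement ds) →
      Subty Δ Sg ((x, τx) :: Γ) S τx τ →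
      (∀ d ∈ ds, DefnTy Δ Sg ((x, τx) :: Γ) S d) →
      ObjTy Δ Sg Γ S x ds τ

/-- Typing of individual member definitions. -/
inductive DefnTy (Δ : NameCtx) (Sg : SubCtx) : VarCtx → LocCtx → Defn → Prop
  | typeDef {Γ S t τ} : DefnTy Δ Sg Γ S (.typeDef t τ)
  | fieldDef {Γ S v τ p τp} :
      pathTy Γ S p = some τp →
      Subty Δ Sg Γ S τp τ →
      DefnTy Δ Sg Γ S (.fieldDef v τ p)
  | methodDef {Γ S f τa xa τr e τr'} :
      HasTy Δ Sg ((xa, τa) :: Γ) S e τr' →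
      Subty Δ Sg ((xa, τa) :: Γ) S τr' τr →
      DefnTy Δ Sg Γ S (.methodDef f τa xa τr e)
end

/-- Heap typing Γ | S ⊢ μ. -/
def HeapTy (Δ : NameCtx) (Sg : SubCtx) (Γ : VarCtx) (S : LocCtx) (μ : Heap) : Prop :=
  ∀ l x ds, (l, x, ds) ∈ μ → ∃ τ, lookupLoc S l = some τ ∧ ObjTy Δ Sg Γ S x ds τ

/-! ### Big-step operational semantics -/

/-- Big-step evaluation μ | e ⇓ μ' | l'. -/
inductive Eval : Heap → Expr → Heap → Loc → Prop
  | loc {μ l} : Eval μ (.path (.loc l)) μ l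
  | field {μ ls xs ds v τ pv l'} :
      heapGet μ ls = some (xs, ds) →
      Defn.fieldDef v τ pv ∈ ds →
      pv.subst xs (.loc ls) = .loc l' →
      Eval μ (.sel (.loc ls) v) μ l'
  | method {μ μ' ls la xs ds f τa xa τr ef l'} :
      heapGet μ ls = some (xs, ds) →
      Defn.methodDef f τa xa τr ef ∈ ds →
      Eval μ ((ef.subst xs (.loc ls)).subst xa (.loc la)) μ' l' →
      Eval μ (.app (.loc ls) f (.loc la)) μ' l'
  | new {μ τ xs ds l} :
      heapGet μ l = none →
      Eval μ (.new τ xs ds) (μ ++ [(l, xs, ds)]) l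
  | lett {μ μ' μ'' x e1 e2 l1 l2} :
      Eval μ e1 μ' l1 →
      Eval μ' (e2.subst x (.loc l1)) μ'' l2 →
      Eval μ (.lett x e1 e2) μ'' l2

/-- Fuel-annotated big-step evaluation μ | e ⇓ⁿ μ' | l_⊥
    (`none` is the stuck marker ⊥). -/
inductive EvalN : Heap → Expr → Nat → Heap → Option Loc → Prop
  | stuck {μ e} : EvalN μ e 0 μ none
  | loc {μ l n} : EvalN μ (.path (.loc l)) (n+1) μ (some l)
  | field {μ ls xs ds v τ pv l' n} :
      heapGet μ ls = some (xs, ds) →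
      Defn.fieldDef v τ pv ∈ ds →
      pv.subst xs (.loc ls) = .loc l' →
      EvalN μ (.sel (.loc ls) v) (n+1) μ (some l')
  | method {μ μ' ls la xs ds f τa xa τr ef r n} :
      heapGet μ ls = some (xs, ds) →
      Defn.methodDef f τa xa τr ef ∈ ds →
      EvalN μ ((ef.subst xs (.loc ls)).subst xa (.loc la)) n μ' r →
      EvalN μ (.app (.loc ls) f (.loc la)) (n+1) μ' r
  | new {μ τ xs ds l n} :
      heapGet μ l = none →
      EvalN μ (.new τ xs ds) (n+1) (μ ++ [(l, xs, ds)]) (some l)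
  | lett {μ μ' μ'' x e1 e2 l1 r n} :
      EvalN μ e1 n μ' (some l1) →
      EvalN μ' (e2.subst x (.loc l1)) n μ'' r →
      EvalN μ (.lett x e1 e2) (n+1) μ'' r
  | lettStuck {μ μ' x e1 e2 n} :
      EvalN μ e1 n μ' none →
      EvalN μ (.lett x e1 e2) (n+1) μ' none

end NominalWyvern
namespace NominalWyvern

/-! ### Occurrences of bases, members and types -/

/-- `Occ τ β chain` : base β occurs in τ with enclosing base types `chain`
    (outermost first); the head base occurs with the empty chain. -/
inductive Occ : Ty → Base → List Base → Prop
  | here {β r} : Occ (.refined β r) β []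
  | nest {β r t B τ β' chain} :
      (t, B, τ) ∈ r → Occ τ β' chain →
      Occ (.refined β r) β' (β :: chain)

/-- Base β occurs (at any depth) in τ. -/
def BaseIn (β : Base) (τ : Ty) : Prop := ∃ chain, Occ τ β chain

/-- A type-member declaration occurs at any nesting depth within τ. -/
inductive MemIn : (Lbl × Bound × Ty) → Ty → Prop
  | here {δ β r} : δ ∈ r → MemIn δ (.refined β r)
  | nest {δ δ' β r} : δ' ∈ r → MemIn δ δ'.2.2 → MemIn δ (.refined β r)

/-- A type occurs strictly inside a refinement of τ. -/
inductive TyIn : Ty → Ty → Prop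
  | here {t B τ β r} : (t, B, τ) ∈ r → TyIn τ (.refined β r)
  | nest {τ' t B τ β r} : (t, B, τ) ∈ r → TyIn τ' τ → TyIn τ' (.refined β r)

/-- Types appearing in the top-level declarations (in Δ) or in the
    refinements of subtype declarations (in Σ). -/
def ProgTy (Δ : NameCtx) (Sg : SubCtx) (τ : Ty) : Prop :=
  (∃ n xn σs, (n, xn, σs) ∈ Δ ∧
    ((∃ t B, Decl.typeMem t B τ ∈ σs) ∨ (∃ v, Decl.field v τ ∈ σs) ∨
     (∃ f xa τ2, Decl.method f τ xa τ2 ∈ σs) ∨ (∃ f xa τ1, Decl.method f τ1 xa τ ∈ σs)))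
  ∨ (∃ n r n', (n, r, n') ∈ Sg ∧ ∃ t B, (t, B, τ) ∈ r)

/-! ### Material/shape separation and the subtype dependency graph -/

/-- Shape-hood of a base type, given shape annotations for named types
    (`shapeN`) and for type members (`shapeT`). -/
def Base.isShape (shapeN : TName → Prop) (shapeT : Lbl → Prop) : Base → Prop
  | .name n => shapeN n
  | .sel _ t => shapeT t

/-- Material/shape separation (Definition: shapes never appear after ≥ or =;
    the upper bound of a shape is a shape and named shapes only subtype named
    shapes; no shapes are refined within refinements). -/
structure MSSep (shapeN : TName → Prop) (shapeT : Lbl → Prop)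
    (Δ : NameCtx) (Sg : SubCtx) : Prop where
  noShapeLowerTop : ∀ n xn σs t B τ, (n, xn, σs) ∈ Δ → Decl.typeMem t B τ ∈ σs →
    B ≠ .le → ∀ β, BaseIn β τ → ¬ β.isShape shapeN shapeT
  noShapeLowerNested : ∀ τ0, ProgTy Δ Sg τ0 → ∀ t B τ, MemIn (t, B, τ) τ0 →
    B ≠ .le → ∀ β, BaseIn β τ → ¬ β.isShape shapeN shapeT
  shapeUpperIsShape : ∀ n xn σs t τ, (n, xn, σs) ∈ Δ → Decl.typeMem t .le τ ∈ σs →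
    shapeT t → ∃ β r, τ = Ty.refined β r ∧ β.isShape shapeN shapeT
  shapeSubShape : ∀ n r n', (n, r, n') ∈ Sg → shapeN n → shapeN n'
  noShapeRefinedInRef : ∀ τ0, ProgTy Δ Sg τ0 → ∀ β r', TyIn (.refined β r') τ0 →
    β.isShape shapeN shapeT → r' = []

/-- Vertices of the subtype dependency graph: ⊤, ⊥, named types, and
    pseudotypes n::t. -/
inductive SVert where
  | top | bot
  | name : TName → SVert
  | pseudo : TName → Lbl → SVert
deriving DecidableEq

/-- The vertex a base type stands for, inside the declaration of n. -/
def vertOf (n : TName) : Base → SVert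
  | .name m => .name m
  | .sel _ t => .pseudo n t

/-- Edges of the (shape-pruned) subtype dependency graph: edges from member
    bounds whose label contains no shape, plus back edges from subtype
    declarations. -/
inductive SDGEdgeP (shapeN : TName → Prop) (shapeT : Lbl → Prop)
    (Δ : NameCtx) (Sg : SubCtx) : SVert → SVert → Prop
  | memb {n xn σs t B τ β chain} :
      (n, xn, σs) ∈ Δ → Decl.typeMem t B τ ∈ σs →
      Occ τ β chain →
      (∀ β' ∈ chain, ¬ Base.isShape shapeN shapeT β') →
      SDGEdgeP shapeN shapeT Δ Sg (.pseudo n t) (vertOf n β)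
  | back {n1 r1 n2} :
      (n1, r1, n2) ∈ Sg →
      SDGEdgeP shapeN shapeT Δ Sg (.name n2) (.name n1)
  | backRef {n1 r1 n2 t B nr rr} :
      (n1, r1, n2) ∈ Sg →
      MemIn (t, B, .refined (.name nr) rr) (.refined (.name n1) r1) →
      SDGEdgeP shapeN shapeT Δ Sg (.name n2) (.name nr)

/-- A valid material/shape separation: the separation conditions hold and the
    subtype dependency graph is acyclic after deleting all shape-labeled
    edges (witnessed by a topological ranking). -/
def ValidMSSep (shapeN : TName → Prop) (shapeT : Lbl → Prop)
    (Δ : NameCtx) (Sg : SubCtx) : Prop :=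
  MSSep shapeN shapeT Δ Sg ∧
  ∃ idx : SVert → Nat, ∀ u v, SDGEdgeP shapeN shapeT Δ Sg u v → idx v < idx u

/-! ### The expose1 / exposes algorithm and its termination measure -/

/-- Eagerly expose an environment, with fuel k (the function `exposes`). -/
def exposesF (Δ : NameCtx) (S : LocCtx) (k : Nat) : VarCtx → VarCtx
  | [] => []
  | (x, τ) :: Γ =>
      (x, (exposeF Δ (exposesF Δ S k Γ) S k τ).getD τ) :: exposesF Δ S k Γ

/-- The defining equations of the single-exposure function `expose1` over an
    already-exposed environment. -/
def Expose1Spec (Δ : NameCtx) (f : VarCtx → Ty → Ty) (Γ : VarCtx) : Prop :=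
  f Γ .top = .top ∧
  f Γ .bot = .bot ∧
  (∀ n r, f Γ (.refined (.name n) r) = .refined (.name n) r) ∧
  (∀ x t r τx B τ', lookupVar Γ x = some τx →
      lookupTypeMem Δ (.var x) τx t = some (B, τ') → B ≠ .ge →
      f Γ (.refined (.sel (.var x) t) r) = (f Γ τ').merge r) ∧
  (∀ x t r, (¬ ∃ τx B τ', lookupVar Γ x = some τx ∧
      lookupTypeMem Δ (.var x) τx t = some (B, τ') ∧ B ≠ Bound.ge) →
      f Γ (.refined (.sel (.var x) t) r) = .refined (.sel (.var x) t) r) ∧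
  (∀ l t r, f Γ (.refined (.sel (.loc l) t) r) = .refined (.sel (.loc l) t) r)

/-- The subtype-dependency component of the expose1 measure. -/
def sdMeasure (idx : SVert → Nat) (Γ : VarCtx) : Ty → Nat
  | .refined (.sel (.var x) t) _ =>
    match lookupVar Γ x with
    | some (.refined (.name n) _) => idx (.pseudo n t)
    | _ => 0
  | _ => 0

/-- The lexicographic termination measure of expose1:
    (head-rank, topological index in the subtype dependency graph). -/
def exposeMeasure (idx : SVert → Nat) (Γ : VarCtx) (τ : Ty) : Nat × Nat :=
  (headRank Γ τ, sdMeasure idx Γ τ)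

end NominalWyvern

namespace NominalWyvern

/-! Refinement subtyping only sees its two sides as sets of members, so it grows with the
left side and shrinks with the right one. Hence `r₁ <: r_L ++ r₂`, and merging can only
enlarge `r₁` on the left and only drops members of `r_L ++ r₂` on the right. -/

theorem SubtyM.fst_eq {Δ : NameCtx} {Sg : SubCtx} {Γ : VarCtx} {S : LocCtx}
    {δ δ' : Lbl × Bound × Ty} (h : SubtyM Δ Sg Γ S δ δ') : δ.1 = δ'.1 := by
  cases h <;> rfl

section SubtyR

variable {Δ : NameCtx} {Sg : SubCtx} {Γ : VarCtx} {S : LocCtx} {r s r' r'' : Refinement}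

theorem subtyR_iff_forall_mem :
    SubtyR Δ Sg Γ S r r' ↔ ∀ δ' ∈ r', ∃ δ ∈ r, SubtyM Δ Sg Γ S δ δ' := by
  induction r' with
  | nil => exact ⟨fun _ _ h => absurd h List.not_mem_nil, fun _ => .nil⟩
  | cons δ' r' ih =>
    rw [List.forall_mem_cons, ← ih]
    constructor
    · rintro (_ | ⟨hmem, hM, htail⟩)
      exact ⟨⟨_, hmem, hM⟩, htail⟩
    · rintro ⟨⟨⟨t, B, τ⟩, hmem, hM⟩, htail⟩
      obtain ⟨t', B', τ'⟩ := δ'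
      obtain rfl : t = t' := hM.fst_eq
      exact .cons hmem hM htail

theorem SubtyR.mono_left (hrs : r ⊆ s) (h : SubtyR Δ Sg Γ S r r') :
    SubtyR Δ Sg Γ S s r' :=
  subtyR_iff_forall_mem.2 fun δ' hδ' =>
    let ⟨δ, hδ, hM⟩ := subtyR_iff_forall_mem.1 h δ' hδ'
    ⟨δ, hrs hδ, hM⟩

theorem SubtyR.of_subset_right (h'' : r'' ⊆ r') (h : SubtyR Δ Sg Γ S r r') :
    SubtyR Δ Sg Γ S r r'' :=
  subtyR_iff_forall_mem.2 fun δ' hδ' => subtyR_iff_forall_mem.1 h δ' (h'' hδ')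

theorem SubtyR.append (h' : SubtyR Δ Sg Γ S r r') (h'' : SubtyR Δ Sg Γ S r r'') :
    SubtyR Δ Sg Γ S r (r' ++ r'') := by
  rw [subtyR_iff_forall_mem, List.forall_mem_append]
  exact ⟨subtyR_iff_forall_mem.1 h', subtyR_iff_forall_mem.1 h''⟩

end SubtyR

theorem subset_mergeRef_right (r r' : Refinement) : r' ⊆ mergeRef r r' :=
  List.subset_append_right _ _

theorem mergeRef_subset_append (r r' : Refinement) : mergeRef r r' ⊆ r ++ r' :=
  (List.filter_sublist.append_right r').subset

/-- **Refinement addition.**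
If r₁ <: r₂ and r₁ <: r_L and r₂ <: r_L, then (r_L +ᵣ r₁) <: (r_L +ᵣ r₂),
where +ᵣ is the refinement merge operation that on conflicts keeps the
right-hand member. -/
theorem refinement_addition
    (Δ : NameCtx) (Sg : SubCtx) (Γ : VarCtx) (S : LocCtx)
    (r1 r2 rL : Refinement)
    (h12 : SubtyR Δ Sg Γ S r1 r2)
    (h1L : SubtyR Δ Sg Γ S r1 rL)
    (h2L : SubtyR Δ Sg Γ S r2 rL) :
    SubtyR Δ Sg Γ S (mergeRef rL r1) (mergeRef rL r2) :=
  ((h1L.append h12).mono_left (subset_mergeRef_right rL r1)).of_subset_right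
    (mergeRef_subset_append rL r2)

end NominalWyvern
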